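/- Let $P=(p_1,\dots,p_n)$, $Q=(q_1,\dots,q_n)$, $R=(r_1,\dots,r_n)$ with all entries in $[1,\infty)$ and $1/p_j+1/q_j=1/r_j+1$ for each $j$. Then for all nonnegative measurable $f,g:\mathbb{R}^n\to[0,\infty]$, $\|f*g\|_{L^R}\le\|f\|_{L^P}\|g\|_{L^Q}$, where $f*g(x)=\int_{\mathbb{R}^n}f(x-t)g(t)\,dt$ and $\|h\|_{L^P}=\left(\int_{\mathbb{R}}\cdots\left(\int_{\mathbb{R}}\left(\int_{\mathbb{R}}h(t_1,\dots,t_n)^{p_1}dt_1\right)^{p_2/p_1}dt_2\right)^{p_3/p_2}\cdots dt_n\right)^{1/p_n}$. -/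

import Mathlib

/-!
Induct on `n`, peeling off the first coordinate. For fixed values `v` of the remaining
coordinates, split the convolution integral as `∫ dw ∫ dc`; Minkowski's integral inequality bounds
the `L^{r₁}` norm in the first coordinate by the integral over `w` of the `L^{r₁}` norm of the
one-dimensional convolution of the slices `f(·, v - w)` and `g(·, w)`, and the one-dimensional
Young inequality bounds that by `F(v - w) G(w)`, where `F`, `G` are the first-coordinate
`L^{p₁}`, `L^{q₁}` norms of `f`, `g`. So the first-coordinate norm of `f * g` is dominated by the
`(n - 1)`-dimensional convolution `F * G`, to which the induction hypothesis applies.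

One-dimensional Young follows from a three-factor Hölder inequality, and Minkowski's inequality
from Hölder's, applied to minorants of finite `p`-th moment so that one may divide.
-/

open MeasureTheory ENNReal

/-- The iterated mixed Lebesgue norm on `ℝ^n`: integrate first in the coordinate `t₁`
with exponent `P 0`, then in `t₂` with exponent `P 1`, and so on. -/
noncomputable def mixedLNorm : (n : ℕ) → (Fin n → ℝ) → ((Fin n → ℝ) → ℝ≥0∞) → ℝ≥0∞
  | 0, _, h => h (fun i => i.elim0)
  | n + 1, P, h =>
      mixedLNorm n (fun i => P i.succ)
        (fun v => (∫⁻ t : ℝ, h (Fin.cons t v) ^ P 0) ^ (1 / P 0))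

namespace ENNReal

theorem mul_rpow_mul_rpow_mul_rpow {a b c : ℝ} (ha : 0 ≤ a) (hb : 0 ≤ b) (hc : 0 ≤ c)
    (u v : ℝ≥0∞) : (u * v) ^ c * u ^ a * v ^ b = u ^ (a + c) * v ^ (b + c) := by
  rw [rpow_add_of_nonneg _ _ ha hc, rpow_add_of_nonneg _ _ hb hc, mul_rpow_of_nonneg _ _ hc]
  ring

theorem rpow_one_div_le_of_le_rpow_mul {p q : ℝ} (hpq : p.HolderConjugate q) {C J : ℝ≥0∞}
    (hC : C ≠ ∞) (h : C ≤ C ^ (1 / q) * J) : C ^ (1 / p) ≤ J := by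
  rcases eq_or_ne C 0 with rfl | hC0
  · simp [hpq.pos]
  have hCq0 : C ^ (1 / q) ≠ 0 := by simp [hC0, hC, hpq.symm.pos]
  have hCq : C ^ (1 / q) ≠ ∞ := rpow_ne_top_of_nonneg (by simp [hpq.symm.nonneg]) hC
  refine (ENNReal.mul_le_mul_iff_right hCq0 hCq).1 (le_trans (le_of_eq ?_) h)
  rw [← rpow_add _ _ hC0 hC, one_div, one_div, add_comm, hpq.inv_add_inv_eq_one, rpow_one]

variable {α : Type*} [MeasurableSpace α] {μ : Measure α}

theorem lintegral_rpow_mul_rpow_mul_rpow_le {f g h : α → ℝ≥0∞} (hf : AEMeasurable f μ)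
    (hg : AEMeasurable g μ) (hh : AEMeasurable h μ) {a b c : ℝ} (ha : 0 ≤ a) (hb : 0 ≤ b)
    (hc : 0 ≤ c) (habc : a + b + c = 1) :
    ∫⁻ x, f x ^ a * g x ^ b * h x ^ c ∂μ ≤
      (∫⁻ x, f x ∂μ) ^ a * (∫⁻ x, g x ∂μ) ^ b * (∫⁻ x, h x ∂μ) ^ c := by
  have := lintegral_prod_norm_pow_le (μ := μ) Finset.univ (f := ![f, g, h]) (p := ![a, b, c])
    (by simp [Fin.forall_fin_succ, hf, hg, hh]) (by simpa [Fin.sum_univ_three] using habc)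
    (by simp [Fin.forall_fin_succ, ha, hb, hc])
  simpa [Fin.prod_univ_three, mul_assoc] using this

theorem lintegral_le_of_forall_lintegral_ne_top [SigmaFinite μ] {f : α → ℝ≥0∞} {c : ℝ≥0∞}
    (h : ∀ g : α → ℝ≥0∞, Measurable g → g ≤ f → ∫⁻ x, g x ∂μ ≠ ∞ → ∫⁻ x, g x ∂μ ≤ c) :
    ∫⁻ x, f x ∂μ ≤ c := by
  obtain ⟨g, hg, hgf, hfg⟩ := exists_measurable_le_lintegral_eq μ f
  obtain ⟨w, hw_pos, hw, hw_int⟩ := exists_pos_lintegral_lt_of_sigmaFinite μ one_ne_zero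
  -- `g` is the increasing limit of `min g (n * w)`, which has finite integral as `w` does
  have hsup : ∀ x, ⨆ n : ℕ, min (g x) (n * w x) = g x := fun x => by
    rw [← inf_iSup_eq, ← iSup_mul, iSup_natCast, top_mul (by simpa using (hw_pos x).ne'),
      inf_top_eq]
  rw [hfg, ← lintegral_congr hsup, lintegral_iSup (f := fun n x => min (g x) (n * w x))
    (fun n => by fun_prop) (fun m n hmn x => min_le_min le_rfl (by gcongr))]
  refine iSup_le fun n => h _ (by fun_prop) (fun x => (min_le_left _ _).trans (hgf x)) ?_
  refine ne_top_of_le_ne_top ?_ (lintegral_mono fun x => min_le_right _ _)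
  rw [lintegral_const_mul _ hw.coe_nnreal_ennreal]
  exact mul_ne_top (natCast_ne_top n) (hw_int.trans one_lt_top).ne

variable {β : Type*} [MeasurableSpace β] {ν : Measure β} [SFinite ν] {F : α → β → ℝ≥0∞}

theorem lintegral_rpow_le_lintegral_Lp_of_le [SFinite μ] (hF : Measurable (Function.uncurry F))
    {p : ℝ} (hp : 1 < p) {G : α → ℝ≥0∞} (hG : Measurable G) (hGF : ∀ x, G x ≤ ∫⁻ y, F x y ∂ν)
    (hG_top : ∫⁻ x, G x ^ p ∂μ ≠ ∞) :
    (∫⁻ x, G x ^ p ∂μ) ^ (1 / p) ≤ ∫⁻ y, (∫⁻ x, F x y ^ p ∂μ) ^ (1 / p) ∂ν := by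
  set q := p.conjExponent
  have hpq : p.HolderConjugate q := .conjExponent hp
  set C := ∫⁻ x, G x ^ p ∂μ
  refine rpow_one_div_le_of_le_rpow_mul hpq hG_top ?_
  have hG_pow : ∀ x, G x ^ p = G x ^ (p - 1) * G x := fun x => by
    conv_lhs => rw [← sub_add_cancel p 1]
    rw [rpow_add_of_nonneg _ _ (by linarith) zero_le_one, rpow_one]
  have hG_conj : ∫⁻ x, (G x ^ (p - 1)) ^ q ∂μ = C := by
    simp_rw [← rpow_mul, hpq.sub_one_mul_conj, C]
  calc C = ∫⁻ x, G x ^ (p - 1) * G x ∂μ := lintegral_congr hG_pow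
    _ ≤ ∫⁻ x, ∫⁻ y, G x ^ (p - 1) * F x y ∂ν ∂μ := lintegral_mono fun x => by
        rw [lintegral_const_mul _ hF.of_uncurry_left]
        gcongr
        exact hGF x
    _ = ∫⁻ y, ∫⁻ x, G x ^ (p - 1) * F x y ∂μ ∂ν :=
        lintegral_lintegral_swap (by fun_prop)
    _ ≤ ∫⁻ y, C ^ (1 / q) * (∫⁻ x, F x y ^ p ∂μ) ^ (1 / p) ∂ν := lintegral_mono fun y => by
        rw [← hG_conj]
        exact lintegral_mul_le_Lp_mul_Lq μ hpq.symm (by fun_prop) hF.of_uncurry_right.aemeasurable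
    _ = C ^ (1 / q) * ∫⁻ y, (∫⁻ x, F x y ^ p ∂μ) ^ (1 / p) ∂ν :=
        lintegral_const_mul' _ _ (rpow_ne_top_of_nonneg (by simp [hpq.symm.nonneg]) hG_top)

theorem lintegral_Lp_lintegral_le_lintegral_Lp [SigmaFinite μ]
    (hF : Measurable (Function.uncurry F)) {p : ℝ} (hp : 1 ≤ p) :
    (∫⁻ x, (∫⁻ y, F x y ∂ν) ^ p ∂μ) ^ (1 / p) ≤ ∫⁻ y, (∫⁻ x, F x y ^ p ∂μ) ^ (1 / p) ∂ν := by
  obtain rfl | hp := hp.eq_or_lt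
  · simpa using (lintegral_lintegral_swap hF.aemeasurable).le
  have hp0 : 0 < p := one_pos.trans hp
  rw [one_div, rpow_inv_le_iff hp0]
  refine lintegral_le_of_forall_lintegral_ne_top fun H hH hHF hH_top => ?_
  have hH_root : ∀ x, (H x ^ p⁻¹) ^ p = H x := fun x => rpow_inv_rpow hp0.ne' _
  have hH_root_le : ∀ x, H x ^ p⁻¹ ≤ ∫⁻ y, F x y ∂ν := fun x =>
    (rpow_inv_le_iff hp0).2 (hHF x)
  have := lintegral_rpow_le_lintegral_Lp_of_le hF hp (by fun_prop) hH_root_le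
    (by simpa only [hH_root] using hH_top)
  rwa [one_div, rpow_inv_le_iff hp0, lintegral_congr hH_root] at this

end ENNReal

section Young

variable {G : Type*} [MeasurableSpace G] [AddCommGroup G] [MeasurableAdd₂ G] [MeasurableNeg G]
  {μ : Measure G} [SFinite μ] [μ.IsAddLeftInvariant]

theorem lintegral_lintegral_sub_mul {f g : G → ℝ≥0∞} (hf : Measurable f) (hg : Measurable g) :
    ∫⁻ x, ∫⁻ t, f (x - t) * g t ∂μ ∂μ = (∫⁻ x, f x ∂μ) * ∫⁻ x, g x ∂μ := by
  rw [lintegral_lintegral_swap (by fun_prop)]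
  have hslice : ∀ t, ∫⁻ x, f (x - t) * g t ∂μ = (∫⁻ x, f x ∂μ) * g t := fun t => by
    rw [lintegral_mul_const _ (by fun_prop), lintegral_sub_right_eq_self f]
  rw [lintegral_congr hslice, lintegral_const_mul _ hg]

theorem lintegral_convolution_Lr_le_Lp_mul_Lq [μ.IsNegInvariant] {p q r : ℝ} (hp : 1 ≤ p)
    (hq : 1 ≤ q) (hr : 1 ≤ r) (hpqr : 1 / p + 1 / q = 1 / r + 1) {f g : G → ℝ≥0∞}
    (hf : Measurable f) (hg : Measurable g) :
    (∫⁻ x, (∫⁻ t, f (x - t) * g t ∂μ) ^ r ∂μ) ^ (1 / r) ≤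
      (∫⁻ x, f x ^ p ∂μ) ^ (1 / p) * (∫⁻ x, g x ^ q ∂μ) ^ (1 / q) := by
  have hp0 : 0 < p := one_pos.trans_le hp
  have hq0 : 0 < q := one_pos.trans_le hq
  have hr0 : 0 < r := one_pos.trans_le hr
  have hr' : 0 ≤ 1 / r := by positivity
  set a := 1 / p - 1 / r
  set b := 1 / q - 1 / r
  have ha : 0 ≤ a := by linarith [(div_le_one hq0).2 hq]
  have hb : 0 ≤ b := by linarith [(div_le_one hp0).2 hp]
  have ha_add : a + 1 / r = 1 / p := sub_add_cancel _ _
  have hb_add : b + 1 / r = 1 / q := sub_add_cancel _ _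
  set A := ∫⁻ x, f x ^ p ∂μ
  set B := ∫⁻ x, g x ^ q ∂μ
  set K : G → ℝ≥0∞ := fun x => ∫⁻ t, f (x - t) ^ p * g t ^ q ∂μ
  have hK : ∫⁻ x, K x ∂μ = A * B :=
    lintegral_lintegral_sub_mul (f := (f · ^ p)) (g := (g · ^ q)) (by fun_prop) (by fun_prop)
  have hpointwise : ∀ x, ∫⁻ t, f (x - t) * g t ∂μ ≤ K x ^ (1 / r) * (A ^ a * B ^ b) := fun x =>
    calc ∫⁻ t, f (x - t) * g t ∂μ
        = ∫⁻ t, (f (x - t) ^ p * g t ^ q) ^ (1 / r) * (f (x - t) ^ p) ^ a * (g t ^ q) ^ b ∂μ := by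
          refine lintegral_congr fun t => ?_
          rw [mul_rpow_mul_rpow_mul_rpow ha hb hr', ha_add, hb_add, ← rpow_mul, ← rpow_mul,
            mul_one_div_cancel hp0.ne', mul_one_div_cancel hq0.ne', rpow_one, rpow_one]
      _ ≤ K x ^ (1 / r) * (∫⁻ t, f (x - t) ^ p ∂μ) ^ a * B ^ b :=
          lintegral_rpow_mul_rpow_mul_rpow_le (by fun_prop) (by fun_prop) (by fun_prop) hr' ha hb
            (by linarith)
      _ = K x ^ (1 / r) * (A ^ a * B ^ b) := by
          rw [lintegral_sub_left_eq_self (fun t => f t ^ p), mul_assoc]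
  calc (∫⁻ x, (∫⁻ t, f (x - t) * g t ∂μ) ^ r ∂μ) ^ (1 / r)
      ≤ (∫⁻ x, (K x ^ (1 / r) * (A ^ a * B ^ b)) ^ r ∂μ) ^ (1 / r) := by
        gcongr with x
        exact hpointwise x
    _ = ((A * B) * (A ^ a * B ^ b) ^ r) ^ (1 / r) := by
        simp_rw [mul_rpow_of_nonneg _ _ hr0.le, ← rpow_mul, one_div_mul_cancel hr0.ne', rpow_one]
        rw [lintegral_mul_const _ (by fun_prop), hK]
    _ = A ^ (1 / p) * B ^ (1 / q) := by
        rw [mul_rpow_of_nonneg _ _ hr', ← rpow_mul, mul_one_div_cancel hr0.ne', rpow_one,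
          ← mul_assoc, mul_rpow_mul_rpow_mul_rpow ha hb hr', ha_add, hb_add]

end Young

section FinCons

variable {α : Type*} {n : ℕ}

@[fun_prop]
theorem Measurable.finCons [MeasurableSpace α] {γ : Type*} [MeasurableSpace γ] {a : γ → α}
    {b : γ → Fin n → α} (ha : Measurable a) (hb : Measurable b) :
    Measurable fun z => (Fin.cons (a z) (b z) : Fin (n + 1) → α) :=
  measurable_pi_iff.2 fun i => Fin.cases ha (fun j => (measurable_pi_apply j).comp hb) i

theorem lintegral_fin_succ_cons [MeasureSpace α] [SigmaFinite (volume : Measure α)]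
    {φ : (Fin (n + 1) → α) → ℝ≥0∞} (hφ : Measurable φ) :
    ∫⁻ x, φ x = ∫⁻ w : Fin n → α, ∫⁻ c : α, φ (Fin.cons c w) := by
  have hmp := (volume_preserving_piFinSuccAbove (fun _ : Fin (n + 1) => α) 0).symm
  rw [← hmp.lintegral_comp_emb (MeasurableEquiv.measurableEmbedding _), Measure.volume_eq_prod,
    lintegral_prod_symm _ (by fun_prop)]
  simp [Fin.consEquiv]

end FinCons

section MixedNorm

variable {n : ℕ}

noncomputable def firstCoordLNorm (p : ℝ) (h : (Fin (n + 1) → ℝ) → ℝ≥0∞) (v : Fin n → ℝ) :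
    ℝ≥0∞ :=
  (∫⁻ t : ℝ, h (Fin.cons t v) ^ p) ^ (1 / p)

theorem mixedLNorm_succ (P : Fin (n + 1) → ℝ) (h : (Fin (n + 1) → ℝ) → ℝ≥0∞) :
    mixedLNorm (n + 1) P h = mixedLNorm n (fun i => P i.succ) (firstCoordLNorm (P 0) h) :=
  rfl

theorem mixedLNorm_mono {P : Fin n → ℝ} (hP : ∀ j, 0 ≤ P j) {h₁ h₂ : (Fin n → ℝ) → ℝ≥0∞}
    (h : h₁ ≤ h₂) : mixedLNorm n P h₁ ≤ mixedLNorm n P h₂ := by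
  induction n with
  | zero => exact h _
  | succ n ih =>
    refine ih (fun j => hP j.succ) fun v => ?_
    have hP0 := hP 0
    gcongr
    exact h _

@[fun_prop]
theorem measurable_firstCoordLNorm {p : ℝ} {h : (Fin (n + 1) → ℝ) → ℝ≥0∞} (hh : Measurable h) :
    Measurable (firstCoordLNorm p h) :=
  (Measurable.lintegral_prod_left' (f := fun z : ℝ × (Fin n → ℝ) => h (Fin.cons z.1 z.2) ^ p)
    (by fun_prop)).pow_const _

theorem firstCoordLNorm_convolution_le {p q r : ℝ} (hp : 1 ≤ p) (hq : 1 ≤ q) (hr : 1 ≤ r)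
    (hpqr : 1 / p + 1 / q = 1 / r + 1) {f g : (Fin (n + 1) → ℝ) → ℝ≥0∞} (hf : Measurable f)
    (hg : Measurable g) (v : Fin n → ℝ) :
    firstCoordLNorm r (fun x => ∫⁻ t, f (x - t) * g t) v ≤
      ∫⁻ w, firstCoordLNorm p f (v - w) * firstCoordLNorm q g w := by
  have hsplit : ∀ s, ∫⁻ t, f (Fin.cons s v - t) * g t =
      ∫⁻ w, ∫⁻ c, f (Fin.cons (s - c) (v - w)) * g (Fin.cons c w) := fun s => by
    rw [lintegral_fin_succ_cons (by fun_prop)]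
    simp_rw [← Matrix.vecCons.eq_1, Matrix.cons_sub_cons]
  calc firstCoordLNorm r (fun x => ∫⁻ t, f (x - t) * g t) v
      = (∫⁻ s, (∫⁻ w, ∫⁻ c, f (Fin.cons (s - c) (v - w)) * g (Fin.cons c w)) ^ r) ^ (1 / r) := by
        simp_rw [firstCoordLNorm, hsplit]
    _ ≤ ∫⁻ w, (∫⁻ s, (∫⁻ c, f (Fin.cons (s - c) (v - w)) * g (Fin.cons c w)) ^ r) ^ (1 / r) :=
        lintegral_Lp_lintegral_le_lintegral_Lp
          (Measurable.lintegral_prod_right' (f := fun z : (ℝ × (Fin n → ℝ)) × ℝ =>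
            f (Fin.cons (z.1.1 - z.2) (v - z.1.2)) * g (Fin.cons z.2 z.1.2)) (by fun_prop)) hr
    _ ≤ ∫⁻ w, firstCoordLNorm p f (v - w) * firstCoordLNorm q g w := lintegral_mono fun w =>
        lintegral_convolution_Lr_le_Lp_mul_Lq hp hq hr hpqr (by fun_prop) (by fun_prop)

end MixedNorm

/-- The `n`-variable mixed-norm Young inequality for nonnegative functions. -/
theorem mixed_norm_young
    (n : ℕ) (P Q R : Fin n → ℝ)
    (hP : ∀ j, 1 ≤ P j) (hQ : ∀ j, 1 ≤ Q j) (hR : ∀ j, 1 ≤ R j)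
    (hPQR : ∀ j, 1 / P j + 1 / Q j = 1 / R j + 1)
    (f g : (Fin n → ℝ) → ℝ≥0∞) (hf : Measurable f) (hg : Measurable g) :
    mixedLNorm n R (fun x => ∫⁻ t, f (x - t) * g t)
      ≤ mixedLNorm n P f * mixedLNorm n Q g := by
  induction n with
  | zero =>
    simp [mixedLNorm, lintegral_unique, volume_pi, Subsingleton.elim _ (fun i : Fin 0 => i.elim0)]
  | succ n ih =>
    rw [mixedLNorm_succ, mixedLNorm_succ P, mixedLNorm_succ Q]
    calc _ ≤ mixedLNorm n (fun i => R i.succ)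
            (fun v => ∫⁻ w, firstCoordLNorm (P 0) f (v - w) * firstCoordLNorm (Q 0) g w) :=
          mixedLNorm_mono (fun j => zero_le_one.trans (hR j.succ))
            (firstCoordLNorm_convolution_le (hP 0) (hQ 0) (hR 0) (hPQR 0) hf hg)
      _ ≤ _ := ih _ _ _ (fun j => hP j.succ) (fun j => hQ j.succ) (fun j => hR j.succ)
            (fun j => hPQR j.succ) _ _ (by fun_prop) (by fun_prop)
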